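/- arXiv:1105.5410 — 2 statements merged into one kernel-verified Lean document; each statement's English description precedes it below -/
import Mathlib

section
/- There exist constants ε₀ > 0 and C > 0 such that for every ε ∈ (0, ε₀], every polar rectangle R with parameters ε, r₀ > 0, θ₀ ∈ ℝ, every r₁ ≥ 0 and every t > 0, one has ∫∫_R (t² − (r₁ + r)²)₊^{−1/2} · r dr dθ ≤ C · min(t, t^{−1/2}). -/
open MeasureTheory Real

/-- `(x)₊^{-1/2}`: equals `x^{-1/2}` for `x > 0` and `0` for `x ≤ 0`. -/
noncomputable def negHalfPos (x : ℝ) : ℝ := if 0 < x then x ^ (-(1/2) : ℝ) else 0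

lemma negHalfPos_eq (x : ℝ) : negHalfPos x = x ^ (-(1/2) : ℝ) := by
  unfold negHalfPos
  split_ifs with h
  · rfl
  · rcases eq_or_lt_of_le (not_lt.mp h) with h0 | h0
    · rw [h0, Real.zero_rpow (by norm_num)]
    · rw [Real.rpow_def_of_neg h0]
      have he : (-(1/2) : ℝ) * π = -(π/2) := by ring
      rw [he, Real.cos_neg, Real.cos_pi_div_two, mul_zero]

lemma negHalfPos_nonneg (x : ℝ) : 0 ≤ negHalfPos x := by
  unfold negHalfPos
  split_ifs with h
  · exact Real.rpow_nonneg h.le _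
  · exact le_refl 0

lemma sqrt_sub_sqrt_le {A B : ℝ} (hB : 0 ≤ B) (hAB : B ≤ A) :
    Real.sqrt A - Real.sqrt B ≤ Real.sqrt (A - B) := by
  have h2 : A ≤ (Real.sqrt B + Real.sqrt (A - B))^2 := by
    nlinarith [Real.sq_sqrt hB, Real.sq_sqrt (sub_nonneg.2 hAB),
      mul_nonneg (Real.sqrt_nonneg B) (Real.sqrt_nonneg (A - B))]
  have h3 : Real.sqrt A ≤ Real.sqrt B + Real.sqrt (A - B) := by
    calc Real.sqrt A ≤ Real.sqrt ((Real.sqrt B + Real.sqrt (A - B))^2) := Real.sqrt_le_sqrt h2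
      _ = Real.sqrt B + Real.sqrt (A - B) := Real.sqrt_sq (by positivity)
  linarith

/-- Integral bound over polar rectangles of the pointwise majorant
`(t² − (r₁ + r)²)₊^{−1/2}` of the diffractive kernel. -/
theorem stmt_4 :
    ∃ ε₀ > (0:ℝ), ∃ C > (0:ℝ), ∀ ε : ℝ, 0 < ε → ε ≤ ε₀ →
      ∀ r₀ : ℝ, 0 < r₀ → ∀ θ₀ : ℝ, ∀ r₁ : ℝ, 0 ≤ r₁ → ∀ t : ℝ, 0 < t →
      (∫ r in Set.Ioc r₀ (r₀ + ε),
        (∫ θ in {θ : ℝ | |θ - θ₀| ≤ ε / r₀ ∧ |θ| ≤ π},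
          negHalfPos (t^2 - (r₁ + r)^2)) * r)
        ≤ C * min t (t ^ (-(1/2) : ℝ)) := by
  refine ⟨1, one_pos, 8 * π, by positivity, ?_⟩
  intro ε hε hε1 r₀ hr₀ θ₀ r₁ hr₁ t ht
  set S : Set ℝ := {θ : ℝ | |θ - θ₀| ≤ ε / r₀ ∧ |θ| ≤ π} with hSdef
  set m : ℝ := (volume S).toReal with hmdef
  have hm0 : 0 ≤ m := ENNReal.toReal_nonneg
  have hmπ : m ≤ 2 * π := by
    have hsub : S ⊆ Set.Icc (-π) π := fun θ hθ => abs_le.mp hθ.2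
    have := measure_mono (μ := volume) hsub
    calc m ≤ (volume (Set.Icc (-π) π)).toReal := by
          apply ENNReal.toReal_mono _ this
          rw [Real.volume_Icc]; exact ENNReal.ofReal_ne_top
      _ = 2 * π := by
          rw [Real.volume_Icc, ENNReal.toReal_ofReal (by linarith [Real.pi_pos])]; ring
  have hmε : m ≤ 2 * (ε / r₀) := by
    have hsub : S ⊆ Set.Icc (θ₀ - ε / r₀) (θ₀ + ε / r₀) := by
      intro θ hθ
      have h := abs_le.mp hθ.1
      exact ⟨by linarith [h.1], by linarith [h.2]⟩
    have := measure_mono (μ := volume) hsub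
    calc m ≤ (volume (Set.Icc (θ₀ - ε / r₀) (θ₀ + ε / r₀))).toReal := by
          apply ENNReal.toReal_mono _ this
          rw [Real.volume_Icc]; exact ENNReal.ofReal_ne_top
      _ ≤ 2 * (ε / r₀) := by
          have hd : 0 < ε / r₀ := div_pos hε hr₀
          rw [Real.volume_Icc]
          rw [ENNReal.toReal_ofReal (by linarith)]
          linarith
  simp only [setIntegral_const, smul_eq_mul]
  set Kt : ℝ := 2 * π * min (2*ε) t * t ^ (-(1/2) : ℝ) with hKt
  have hmin : (0:ℝ) < min (2*ε) t := lt_min (by linarith) ht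
  have htp : (0:ℝ) < t ^ (-(1/2):ℝ) := Real.rpow_pos_of_pos ht _
  have hKt0 : 0 ≤ Kt := by
    rw [hKt]
    exact mul_nonneg (mul_nonneg (by positivity) hmin.le) htp.le
  -- pointwise bound
  have hpt : ∀ r ∈ Set.Ioc r₀ (r₀+ε),
      m * negHalfPos (t^2 - (r₁+r)^2) * r ≤ Kt * negHalfPos (t - r₁ - r) := by
    rintro r ⟨hr1, hr2⟩
    have hrt : 0 < r := hr₀.trans hr1
    by_cases hpos : 0 < t^2 - (r₁+r)^2
    · have hs0 : 0 ≤ r₁ + r := by linarith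
      have hst : r₁ + r < t := by nlinarith
      have hmr : m * r ≤ 2 * π * min (2*ε) t := by
        rcases le_total (2*ε) t with h2 | h2
        · rw [min_eq_left h2]
          rcases le_total ε r₀ with he | he
          · have hr2' : r ≤ 2 * r₀ := by linarith
            calc m * r ≤ (2*(ε/r₀)) * (2*r₀) := mul_le_mul hmε hr2' hrt.le (by positivity)
              _ = 4 * ε := by field_simp; ring
              _ ≤ 2*π*(2*ε) := by nlinarith [Real.pi_gt_three]
          · calc m * r ≤ (2*π) * (2*ε) := mul_le_mul hmπ (by linarith) hrt.le (by positivity)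
              _ = 2*π*(2*ε) := by ring
        · rw [min_eq_right h2]
          calc m * r ≤ (2*π) * t := mul_le_mul hmπ (by linarith) hrt.le (by positivity)
            _ = 2*π*t := by ring
      have hb : negHalfPos (t^2-(r₁+r)^2) ≤ t ^ (-(1/2):ℝ) * negHalfPos (t - r₁ - r) := by
        rw [negHalfPos_eq, negHalfPos_eq]
        have key : t * (t - r₁ - r) ≤ t^2 - (r₁+r)^2 := by nlinarith
        have hpos2 : 0 < t * (t - r₁ - r) := mul_pos ht (by linarith)
        calc (t^2-(r₁+r)^2) ^ (-(1/2):ℝ) ≤ (t * (t - r₁ - r)) ^ (-(1/2):ℝ) :=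
              Real.rpow_le_rpow_of_nonpos hpos2 key (by norm_num)
          _ = t ^ (-(1/2):ℝ) * (t - r₁ - r) ^ (-(1/2):ℝ) := Real.mul_rpow ht.le (by linarith)
      calc m * negHalfPos (t^2-(r₁+r)^2) * r = (m*r) * negHalfPos (t^2-(r₁+r)^2) := by ring
        _ ≤ (2*π*min (2*ε) t) * (t ^ (-(1/2):ℝ) * negHalfPos (t - r₁ - r)) :=
            mul_le_mul hmr hb (negHalfPos_nonneg _)
              (mul_nonneg (by positivity) hmin.le)
        _ = Kt * negHalfPos (t - r₁ - r) := by rw [hKt]; ring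
    · have hz : negHalfPos (t^2-(r₁+r)^2) = 0 := by unfold negHalfPos; rw [if_neg hpos]
      rw [hz, mul_zero, zero_mul]
      exact mul_nonneg hKt0 (negHalfPos_nonneg _)
  -- integrability
  have hnhp : (fun r : ℝ => negHalfPos (t - r₁ - r)) = fun r : ℝ => (t - r₁ - r) ^ (-(1/2):ℝ) :=
    funext fun r => negHalfPos_eq _
  have hIcomp : IntervalIntegrable (fun r : ℝ => (t - r₁ - r) ^ (-(1/2):ℝ)) volume r₀ (r₀+ε) := by
    have h1 : IntervalIntegrable (fun u : ℝ => u ^ (-(1/2):ℝ)) volume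
        ((t-r₁) - r₀) ((t-r₁) - (r₀+ε)) := intervalIntegral.intervalIntegrable_rpow' (by norm_num)
    have h2 := h1.comp_sub_left (t - r₁)
    simpa using h2
  have hIOn : IntegrableOn (fun r : ℝ => negHalfPos (t - r₁ - r)) (Set.Ioc r₀ (r₀+ε)) volume := by
    rw [hnhp]
    exact (intervalIntegrable_iff_integrableOn_Ioc_of_le (by linarith)).mp hIcomp
  have hgint : IntegrableOn (fun r : ℝ => Kt * negHalfPos (t - r₁ - r)) (Set.Ioc r₀ (r₀+ε)) volume :=
    hIOn.const_mul Kt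
  have hfaesm : AEStronglyMeasurable (fun r : ℝ => m * negHalfPos (t^2 - (r₁+r)^2) * r)
      (volume.restrict (Set.Ioc r₀ (r₀+ε))) := by
    have hmeas : Measurable fun r : ℝ => m * negHalfPos (t^2 - (r₁+r)^2) * r := by
      simp only [negHalfPos_eq]
      fun_prop
    exact hmeas.aestronglyMeasurable
  have hfint : IntegrableOn (fun r : ℝ => m * negHalfPos (t^2 - (r₁+r)^2) * r)
      (Set.Ioc r₀ (r₀+ε)) volume := by
    refine hgint.mono' hfaesm ?_
    rw [ae_restrict_iff' measurableSet_Ioc]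
    refine ae_of_all _ fun r hr => ?_
    have h0 : 0 ≤ m * negHalfPos (t^2 - (r₁+r)^2) * r :=
      mul_nonneg (mul_nonneg hm0 (negHalfPos_nonneg _)) (le_of_lt (hr₀.trans hr.1))
    rw [Real.norm_eq_abs, abs_of_nonneg h0]
    exact hpt r hr
  -- the one-dimensional integral bound
  have hJ : (∫ r in Set.Ioc r₀ (r₀+ε), negHalfPos (t - r₁ - r))
      ≤ 2 * min (Real.sqrt ε) (Real.sqrt t) := by
    simp only [negHalfPos_eq]
    rw [← intervalIntegral.integral_of_le (by linarith : r₀ ≤ r₀ + ε)]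
    have hcs := intervalIntegral.integral_comp_sub_left (a := r₀) (b := r₀ + ε)
      (fun u : ℝ => u ^ (-(1/2):ℝ)) (t - r₁)
    rw [hcs, integral_rpow (Or.inl (by norm_num))]
    have hexp : (-(1/2) : ℝ) + 1 = 1/2 := by norm_num
    rw [hexp, ← Real.sqrt_eq_rpow, ← Real.sqrt_eq_rpow]
    set A := t - r₁ - r₀ with hA
    set B := t - r₁ - (r₀ + ε) with hB
    have hBA : B = A - ε := by rw [hA, hB]; ring
    have hAt : A ≤ t := by rw [hA]; linarith
    have hdiv : (Real.sqrt A - Real.sqrt B) / (1/2) = 2 * (Real.sqrt A - Real.sqrt B) := by ring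
    rw [hdiv]
    rcases le_or_gt A 0 with hA0 | hA0
    · have h1 : Real.sqrt A = 0 := Real.sqrt_eq_zero'.mpr hA0
      have h2 : 0 ≤ Real.sqrt B := Real.sqrt_nonneg B
      have h3 : 0 ≤ min (Real.sqrt ε) (Real.sqrt t) :=
        le_min (Real.sqrt_nonneg _) (Real.sqrt_nonneg _)
      rw [h1]; linarith
    · rcases le_or_gt B 0 with hB0 | hB0
      · have h1 : Real.sqrt B = 0 := Real.sqrt_eq_zero'.mpr hB0
        have hAε : A ≤ ε := by rw [hBA] at hB0; linarith
        have h2 : Real.sqrt A ≤ Real.sqrt ε := Real.sqrt_le_sqrt hAε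
        have h3 : Real.sqrt A ≤ Real.sqrt t := Real.sqrt_le_sqrt hAt
        have := le_min h2 h3
        rw [h1]; linarith
      · have h2 : Real.sqrt A - Real.sqrt B ≤ Real.sqrt ε := by
          have h := sqrt_sub_sqrt_le hB0.le (by rw [hBA]; linarith : B ≤ A)
          rwa [show A - B = ε by rw [hBA]; ring] at h
        have h3 : Real.sqrt A - Real.sqrt B ≤ Real.sqrt t :=
          le_trans (by linarith [Real.sqrt_nonneg B, Real.sqrt_le_sqrt hAt])
            (le_refl (Real.sqrt t))
        have := le_min h2 h3
        linarith
  -- final numeric bound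
  have hsε : Real.sqrt ε ≤ 1 := by
    rw [show (1:ℝ) = Real.sqrt 1 by rw [Real.sqrt_one]]
    exact Real.sqrt_le_sqrt hε1
  have hfinal : Kt * (2 * min (Real.sqrt ε) (Real.sqrt t)) ≤ 8 * π * min t (t ^ (-(1/2):ℝ)) := by
    rcases le_total t 1 with ht1 | ht1
    · have hmt : min t (t ^ (-(1/2):ℝ)) = t := min_eq_left (by
        have h1 : (1:ℝ) ≤ t ^ (-(1/2):ℝ) :=
          Real.one_le_rpow_of_pos_of_le_one_of_nonpos ht ht1 (by norm_num)
        linarith)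
      rw [hmt, hKt]
      have h3 : Real.sqrt t * t ^ (-(1/2):ℝ) = 1 := by
        rw [Real.sqrt_eq_rpow, ← Real.rpow_add ht]; norm_num
      calc 2*π*min (2*ε) t * t^(-(1/2):ℝ) * (2 * min (Real.sqrt ε) (Real.sqrt t))
          = 4*π*(min (2*ε) t)*(min (Real.sqrt ε) (Real.sqrt t))*t^(-(1/2):ℝ) := by ring
        _ ≤ 4*π*t*(Real.sqrt t)*t^(-(1/2):ℝ) := by
            gcongr
            · exact min_le_right _ _
            · exact min_le_right _ _
        _ = 4*π*t := by rw [mul_assoc, h3, mul_one]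
        _ ≤ 8*π*t := by nlinarith [Real.pi_pos]
    · have hmt : min t (t ^ (-(1/2):ℝ)) = t ^ (-(1/2):ℝ) := min_eq_right (by
        have h1 : t ^ (-(1/2):ℝ) ≤ 1 := Real.rpow_le_one_of_one_le_of_nonpos ht1 (by norm_num)
        linarith)
      rw [hmt, hKt]
      calc 2*π*min (2*ε) t * t^(-(1/2):ℝ) * (2 * min (Real.sqrt ε) (Real.sqrt t))
          = 4*π*(min (2*ε) t)*(min (Real.sqrt ε) (Real.sqrt t))*t^(-(1/2):ℝ) := by ring
        _ ≤ 4*π*2*1*t^(-(1/2):ℝ) := by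
            gcongr
            · exact (min_le_left _ _).trans (by linarith)
            · exact (min_le_left _ _).trans hsε
        _ = 8*π*t^(-(1/2):ℝ) := by ring
  calc (∫ r in Set.Ioc r₀ (r₀+ε), m * negHalfPos (t^2 - (r₁+r)^2) * r)
      ≤ ∫ r in Set.Ioc r₀ (r₀+ε), Kt * negHalfPos (t - r₁ - r) :=
        setIntegral_mono_on hfint hgint measurableSet_Ioc hpt
    _ = Kt * ∫ r in Set.Ioc r₀ (r₀+ε), negHalfPos (t - r₁ - r) := integral_const_mul Kt _
    _ ≤ Kt * (2 * min (Real.sqrt ε) (Real.sqrt t)) := mul_le_mul_of_nonneg_left hJ hKt0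
    _ ≤ 8 * π * min t (t ^ (-(1/2):ℝ)) := hfinal
end

section
/- For every ρ > 0 and every δ ∈ (0,1) there exists a constant C > 0 such that the following holds: for every α > 1, for β ≥ 0 the unique nonnegative real with cosh β = α, for every M ∈ [0, β] such that cosh s − 1 ≤ (1 − δ)(α − 1) for all s ∈ [0, M], and for every φ ∈ ℝ, one has ∫₀^M (α − cosh s)^{−1/2} · |sin φ| / (cosh(s/ρ) − cos φ) ds ≤ C (α − 1)^{−1/2}. -/
/-!
On `[0, M]` the hypothesis gives `α - cosh s ≥ δ (α - 1)`, so the weight `(α - cosh s)^(-1/2)` is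
at most `(δ (α - 1))^(-1/2) = δ^(-1/2) (α - 1)^(-1/2)`. For the angular factor put
`b = ρ √(2 (1 - cos φ))`: then `|sin φ| ≤ b / ρ` and `cosh (s/ρ) - cos φ ≥ (b² + s²) / (2ρ²)`, so it
is dominated by `2ρb / (b² + s²)`, whose integral over `[0, ∞)` is `πρ` independently of `φ`.
Hence `C = πρ / √δ` works.
-/

open MeasureTheory Real

theorem Real.one_add_sq_div_two_le_cosh (x : ℝ) : 1 + x ^ 2 / 2 ≤ cosh x := by
  have h := sum_le_hasSum (Finset.range 2)
    (fun n _ => div_nonneg (by rw [pow_mul]; positivity) (by positivity)) (hasSum_cosh x)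
  norm_num [Finset.sum_range_succ] at h
  linarith

theorem Real.abs_sin_le_sqrt_two_mul_one_sub_cos (φ : ℝ) : |sin φ| ≤ √(2 * (1 - cos φ)) := by
  rw [← sqrt_sq_eq_abs]
  gcongr
  nlinarith [sin_sq_add_cos_sq φ, neg_one_le_cos φ]

theorem integral_inv_sq_add_sq_le {b : ℝ} (hb : 0 < b) (M : ℝ) :
    ∫ s in (0 : ℝ)..M, (b ^ 2 + s ^ 2)⁻¹ ≤ π / (2 * b) := by
  have hscale : ∀ s : ℝ, (b ^ 2 + s ^ 2)⁻¹ = b⁻¹ ^ 2 * (1 + (s / b) ^ 2)⁻¹ := fun s => by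
    field_simp
  calc ∫ s in (0 : ℝ)..M, (b ^ 2 + s ^ 2)⁻¹ = b⁻¹ * arctan (M / b) := by
        simp_rw [hscale]
        rw [intervalIntegral.integral_const_mul,
          intervalIntegral.integral_comp_div (fun x => (1 + x ^ 2)⁻¹) hb.ne',
          integral_inv_one_add_sq, zero_div, arctan_zero, sub_zero, smul_eq_mul]
        field_simp
    _ ≤ b⁻¹ * (π / 2) := by gcongr; exact (arctan_lt_pi_div_two _).le
    _ = π / (2 * b) := by field_simp

theorem abs_sin_div_cosh_sub_cos_nonneg (ρ φ s : ℝ) : 0 ≤ |sin φ| / (cosh (s / ρ) - cos φ) :=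
  div_nonneg (abs_nonneg _) (by linarith [one_le_cosh (s / ρ), cos_le_one φ])

theorem intervalIntegrable_abs_sin_div_cosh_sub_cos (ρ φ a b : ℝ) :
    IntervalIntegrable (fun s => |sin φ| / (cosh (s / ρ) - cos φ)) volume a b := by
  rcases (cos_le_one φ).eq_or_lt with hcos | hcos
  · simp [sin_eq_zero_iff_cos_eq.mpr (Or.inl hcos)]
  · refine Continuous.intervalIntegrable ?_ a b
    refine continuous_const.div (by fun_prop) fun s => ?_
    linarith [one_le_cosh (s / ρ)]

theorem abs_sin_div_cosh_sub_cos_le {ρ φ : ℝ} (hρ : 0 < ρ) (hφ : cos φ < 1) {b : ℝ}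
    (hb : b = ρ * √(2 * (1 - cos φ))) (s : ℝ) :
    |sin φ| / (cosh (s / ρ) - cos φ) ≤ 2 * ρ * b / (b ^ 2 + s ^ 2) := by
  have hb2 : b ^ 2 = 2 * ρ ^ 2 * (1 - cos φ) := by
    rw [hb, mul_pow, sq_sqrt (by linarith)]; ring
  have hden : (b ^ 2 + s ^ 2) / (2 * ρ ^ 2) ≤ cosh (s / ρ) - cos φ := by
    have hcosh := one_add_sq_div_two_le_cosh (s / ρ)
    rw [div_pow] at hcosh
    rw [hb2, div_le_iff₀ (by positivity)]
    field_simp at hcosh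
    linarith
  have hb0 : 0 < b := by rw [hb]; have := sub_pos.2 hφ; positivity
  calc |sin φ| / (cosh (s / ρ) - cos φ)
      ≤ √(2 * (1 - cos φ)) / ((b ^ 2 + s ^ 2) / (2 * ρ ^ 2)) :=
        div_le_div₀ (sqrt_nonneg _) (abs_sin_le_sqrt_two_mul_one_sub_cos φ) (by positivity) hden
    _ = 2 * ρ * b / (b ^ 2 + s ^ 2) := by
        rw [hb]; field_simp

theorem integral_abs_sin_div_cosh_sub_cos_le {ρ : ℝ} (hρ : 0 < ρ) {M : ℝ} (hM : 0 ≤ M) (φ : ℝ) :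
    ∫ s in (0 : ℝ)..M, |sin φ| / (cosh (s / ρ) - cos φ) ≤ π * ρ := by
  rcases (cos_le_one φ).eq_or_lt with hcos | hcos
  · simp [sin_eq_zero_iff_cos_eq.mpr (Or.inl hcos)]
    positivity
  set b := ρ * √(2 * (1 - cos φ)) with hb
  have hb0 : 0 < b := by have := sub_pos.2 hcos; positivity
  calc ∫ s in (0 : ℝ)..M, |sin φ| / (cosh (s / ρ) - cos φ)
      ≤ ∫ s in (0 : ℝ)..M, 2 * ρ * b * (b ^ 2 + s ^ 2)⁻¹ := by
        refine intervalIntegral.integral_mono hM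
          (intervalIntegrable_abs_sin_div_cosh_sub_cos ρ φ 0 M) ?_ fun s => ?_
        · refine Continuous.intervalIntegrable ?_ 0 M
          exact continuous_const.mul ((by fun_prop : Continuous fun s : ℝ => b ^ 2 + s ^ 2).inv₀
            fun s => by positivity)
        · exact (abs_sin_div_cosh_sub_cos_le hρ hcos hb s).trans_eq (div_eq_mul_inv _ _)
    _ = 2 * ρ * b * ∫ s in (0 : ℝ)..M, (b ^ 2 + s ^ 2)⁻¹ := intervalIntegral.integral_const_mul _ _
    _ ≤ 2 * ρ * b * (π / (2 * b)) := by gcongr; exact integral_inv_sq_add_sq_le hb0 M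
    _ = π * ρ := by field_simp

/-- Estimate (eqn:arctan): the contribution of `[0, M]` to the diffractive
integral on the flat cone `C(S¹_ρ)`. -/
theorem stmt_10 : ∀ ρ : ℝ, 0 < ρ → ∀ δ : ℝ, 0 < δ → δ < 1 → ∃ C > (0:ℝ),
    ∀ α : ℝ, 1 < α → ∀ β : ℝ, 0 ≤ β → Real.cosh β = α →
    ∀ M : ℝ, 0 ≤ M → M ≤ β →
    (∀ s : ℝ, 0 ≤ s → s ≤ M → Real.cosh s - 1 ≤ (1 - δ) * (α - 1)) →
    ∀ φ : ℝ,
    (∫ s in (0:ℝ)..M, (α - Real.cosh s) ^ (-(1/2) : ℝ) *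
        (|Real.sin φ| / (Real.cosh (s / ρ) - Real.cos φ)))
      ≤ C * (α - 1) ^ (-(1/2) : ℝ) := by
  intro ρ hρ δ hδ _
  refine ⟨π * ρ / √δ, by positivity, ?_⟩
  intro α hα β _ _ M hM _ hgap φ
  have hδα : 0 < δ * (α - 1) := mul_pos hδ (sub_pos.2 hα)
  have hmargin : ∀ s ∈ Set.Icc 0 M, δ * (α - 1) ≤ α - cosh s := fun s hs => by
    linarith [hgap s hs.1 hs.2]
  set K := (δ * (α - 1)) ^ (-(1/2) : ℝ) with hKdef
  have hK : K = (√δ)⁻¹ * (α - 1) ^ (-(1/2) : ℝ) := by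
    rw [hKdef, mul_rpow hδ.le (sub_pos.2 hα).le, rpow_neg hδ.le, sqrt_eq_rpow]
  have hweight_cont : ContinuousOn (fun s => (α - cosh s) ^ (-(1/2) : ℝ)) (Set.uIcc 0 M) := by
    refine (continuous_const.sub continuous_cosh).continuousOn.rpow_const fun s hs => ?_
    rw [Set.uIcc_of_le hM] at hs
    exact Or.inl (hδα.trans_le (hmargin s hs)).ne'
  calc ∫ s in (0:ℝ)..M, (α - cosh s) ^ (-(1/2) : ℝ) * (|sin φ| / (cosh (s / ρ) - cos φ))
      ≤ ∫ s in (0:ℝ)..M, K * (|sin φ| / (cosh (s / ρ) - cos φ)) := by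
        refine intervalIntegral.integral_mono_on hM
          ((intervalIntegrable_abs_sin_div_cosh_sub_cos ρ φ 0 M).continuousOn_mul hweight_cont)
          ((intervalIntegrable_abs_sin_div_cosh_sub_cos ρ φ 0 M).const_mul K) fun s hs => ?_
        gcongr
        · exact abs_sin_div_cosh_sub_cos_nonneg ρ φ s
        · exact rpow_le_rpow_of_nonpos hδα (hmargin s hs) (by norm_num)
    _ = K * ∫ s in (0:ℝ)..M, |sin φ| / (cosh (s / ρ) - cos φ) :=
        intervalIntegral.integral_const_mul _ _
    _ ≤ K * (π * ρ) := by gcongr; exact integral_abs_sin_div_cosh_sub_cos_le hρ hM φ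
    _ = π * ρ / √δ * (α - 1) ^ (-(1/2) : ℝ) := by rw [hK]; ring
end
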